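/- For every positive integer k, ϖ₃ ∘ α_[k] = α_[k] ∘ ϖ₃ ∘ λ^{k-1} as maps on B_ω^{F³}, i.e., for all (i,j,p), ((i,j,p)ϖ₃)α_[k] = (((i,j,p)α_[k])ϖ₃)λ^{k-1}. -/

import Mathlib

/-- The bicyclic-extension semigroup operation on `ℕ × ℕ × Fin n`. -/
def Bmul (n : ℕ) (x y : ℕ × ℕ × Fin n) : ℕ × ℕ × Fin n :=
  if x.2.1 ≤ y.1 then
    (x.1 - x.2.1 + y.1, y.2.1,
      ⟨max (x.2.2.1 - (y.1 - x.2.1)) y.2.2.1, by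
        have h1 := x.2.2.2; have h2 := y.2.2.2; omega⟩)
  else
    (x.1, x.2.1 - y.1 + y.2.1,
      ⟨max x.2.2.1 (y.2.2.1 - (x.2.1 - y.1)), by
        have h1 := x.2.2.2; have h2 := y.2.2.2; omega⟩)

/-- The shift endomorphism λ. -/
def lamB (n : ℕ) (x : ℕ × ℕ × Fin n) : ℕ × ℕ × Fin n :=
  (x.1 + 1, x.2.1 + 1, x.2.2)

/-- The endomorphism ϖ_n. -/
def varpiB (n : ℕ) (x : ℕ × ℕ × Fin n) : ℕ × ℕ × Fin n :=
  (x.1 + x.2.2.1, x.2.1 + x.2.2.1,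
    ⟨n - 1 - x.2.2.1, by have := x.2.2.2; omega⟩)

/-- The endomorphism α_[k] of B_ω^{F³}. -/
def alphaB (k : ℕ) (x : ℕ × ℕ × Fin 3) : ℕ × ℕ × Fin 3 :=
  if x.2.2.1 = 2 then (k * (x.1 + 1) - 1, k * (x.2.1 + 1) - 1, x.2.2)
  else (k * x.1, k * x.2.1, x.2.2)

lemma lamB_iterate (n m : ℕ) (x : ℕ × ℕ × Fin n) :
    (lamB n)^[m] x = (x.1 + m, x.2.1 + m, x.2.2) := by
  induction m with
  | zero => rfl
  | succ m ih =>
    rw [Function.iterate_succ_apply', ih, lamB]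
    simp only [add_assoc]

lemma alphaB_eq_of_pos {k : ℕ} (hk : 0 < k) (x : ℕ × ℕ × Fin 3) :
    alphaB k x =
      (k * x.1 + if x.2.2.1 = 2 then k - 1 else 0,
        k * x.2.1 + if x.2.2.1 = 2 then k - 1 else 0, x.2.2) := by
  unfold alphaB
  split_ifs
  · rw [mul_add, mul_one, mul_add, mul_one, Nat.add_sub_assoc hk, Nat.add_sub_assoc hk]
  · simp only [add_zero]

/-- `ϖ₃ ∘ α_[k] = α_[k] ∘ ϖ₃ ∘ λ^{k-1}` (composition left to right). -/
theorem varpi_alpha (k : ℕ) (hk : 0 < k) (x : ℕ × ℕ × Fin 3) :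
    alphaB k (varpiB 3 x) = (lamB 3)^[k - 1] (varpiB 3 (alphaB k x)) := by
  obtain ⟨i, j, p⟩ := x
  rw [lamB_iterate, alphaB_eq_of_pos hk, alphaB_eq_of_pos hk]
  -- on level `p`, with `e q := if q = 2 then k - 1 else 0`, each coordinate `a` needs
  -- `k * (a + p) + e (2 - p) = k * a + e p + p + (k - 1)`
  fin_cases p <;> simp only [varpiB, Prod.mk.injEq] <;> grind
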